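/- Fix j ≥ 1 and an integer n ≥ 1, and suppose λ is a real number with −b_{j+1} < λ < −μ_j and λ + n² K(λ) = 0. Then there exists λ′ with λ < λ′ < −μ_j and λ′ + (n+1)² K(λ′) = 0; that is, G_{n+1} has a zero strictly between λ and −μ_j. -/

import Mathlib

open Filter Topology

/-! On the gap `(-b_{j+1}, -b_j)` every denominator `x + b_k` stays a fixed distance away from
zero, so `K` is continuous there. Since `n² K(λ) = -λ > 0`, we get `K(λ) > 0` and hence
`G_{n+1}(λ) > G_n(λ) = 0`, while `G_{n+1}(-μ_j) = -μ_j < 0`; the intermediate value theorem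
gives the zero. -/

/- Indexing convention: the paper's sequences `(a_k)_{k ≥ 1}`, `(b_k)_{k ≥ 1}` are
encoded as functions `a b : ℕ → ℝ`, where index `k : ℕ` corresponds to the paper's
index `k + 1` (so `b 0 = b_1`, etc.). -/

/-- `GPK a b z = K(z) = ∑ a_k / (z + b_k)`. -/
noncomputable def GPK (a b : ℕ → ℝ) (z : ℂ) : ℂ := ∑' k : ℕ, (a k : ℂ) / (z + (b k : ℂ))

/-- `GPG a b n z = G_n(z) = z + n² K(z)`. -/
noncomputable def GPG (a b : ℕ → ℝ) (n : ℕ) (z : ℂ) : ℂ := z + (n : ℂ) ^ 2 * GPK a b z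

open Set

noncomputable def realK (a b : ℕ → ℝ) (x : ℝ) : ℝ := ∑' k, a k / (x + b k)

lemma GPK_ofReal (a b : ℕ → ℝ) (x : ℝ) : GPK a b x = realK a b x := by
  rw [GPK, realK, Complex.ofReal_tsum]
  push_cast
  rfl

lemma min_le_abs_add_of_mem_Icc {b : ℕ → ℝ} (hb : Monotone b) (j : ℕ) {l r x : ℝ}
    (hx : x ∈ Icc l r) (k : ℕ) : min (-r - b j) (l + b (j + 1)) ≤ |x + b k| := by
  rcases le_or_gt k j with hk | hk
  · have hbk := hb hk
    calc min (-r - b j) (l + b (j + 1)) ≤ -r - b j := min_le_left _ _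
      _ ≤ -(x + b k) := by linarith [hx.2]
      _ ≤ |x + b k| := neg_le_abs _
  · have hbk := hb (Nat.succ_le_of_lt hk)
    calc min (-r - b j) (l + b (j + 1)) ≤ l + b (j + 1) := min_le_right _ _
      _ ≤ x + b k := by linarith [hx.1]
      _ ≤ |x + b k| := le_abs_self _

lemma continuousOn_realK_of_le_abs {a b : ℕ → ℝ} (ha : Summable a) {s : Set ℝ} {ε : ℝ}
    (hε : 0 < ε) (hs : ∀ x ∈ s, ∀ k, ε ≤ |x + b k|) : ContinuousOn (realK a b) s := by
  refine continuousOn_tsum (u := fun k => |a k| / ε) (fun k => ?_) (ha.abs.div_const ε) ?_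
  · refine continuousOn_const.div (by fun_prop) fun x hx hzero => ?_
    have := hs x hx k
    rw [hzero, abs_zero] at this
    linarith
  · intro k x hx
    rw [Real.norm_eq_abs, abs_div]
    exact div_le_div_of_nonneg_left (abs_nonneg _) hε (hs x hx k)

lemma continuousOn_realK_Icc {a b : ℕ → ℝ} (ha : Summable a) (hb : Monotone b) {j : ℕ}
    {l r : ℝ} (hl : -b (j + 1) < l) (hr : r < -b j) : ContinuousOn (realK a b) (Icc l r) :=
  continuousOn_realK_of_le_abs ha (lt_min (by linarith) (by linarith))
    fun _ hx => min_le_abs_add_of_mem_Icc hb j hx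

theorem real_zero_increases_general
    (a b : ℕ → ℝ) (α : ℝ)
    (hsum : HasSum a (α ^ 2))
    (hb0 : 0 ≤ b 0) (hbmono : StrictMono b)
    (μ : ℕ → ℝ)
    (hμ : ∀ j, b j < μ j ∧ μ j < b (j + 1) ∧ GPK a b (-(μ j : ℂ)) = 0)
    (j : ℕ) (n : ℕ)
    (lam : ℝ) (h1 : -(b (j + 1)) < lam) (h2 : lam < -(μ j))
    (hzero : (lam : ℂ) + (n : ℂ) ^ 2 * GPK a b (lam : ℂ) = 0) :
    ∃ lam' : ℝ, lam < lam' ∧ lam' < -(μ j) ∧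
      (lam' : ℂ) + ((n : ℂ) + 1) ^ 2 * GPK a b (lam' : ℂ) = 0 := by
  obtain ⟨hbμ, -, hKμ⟩ := hμ j
  have hμpos : 0 < μ j := (hb0.trans (hbmono.monotone j.zero_le)).trans_lt hbμ
  have hKμ_real : realK a b (-μ j) = 0 := by
    rw [show -(μ j : ℂ) = ((-μ j : ℝ) : ℂ) by push_cast; rfl, GPK_ofReal] at hKμ
    exact_mod_cast hKμ
  have hzero_real : lam + (n : ℝ) ^ 2 * realK a b lam = 0 := by
    rw [GPK_ofReal] at hzero
    exact_mod_cast hzero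
  have hKlam_pos : 0 < realK a b lam :=
    pos_of_mul_pos_right (by linarith : 0 < (n : ℝ) ^ 2 * realK a b lam) (sq_nonneg _)
  let g : ℝ → ℝ := fun x => x + ((n : ℝ) + 1) ^ 2 * realK a b x
  have hg_lam : 0 < g lam := by
    have : (n : ℝ) ^ 2 < ((n : ℝ) + 1) ^ 2 := by nlinarith [n.cast_nonneg (α := ℝ)]
    nlinarith
  have hg_μ : g (-μ j) < 0 := by simp only [g, hKμ_real, mul_zero, add_zero]; linarith
  have hg_cont : ContinuousOn g (Icc lam (-μ j)) :=
    continuousOn_id.add (continuousOn_const.mul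
      (continuousOn_realK_Icc hsum.summable hbmono.monotone h1 (by linarith)))
  obtain ⟨lam', ⟨hlam_lt, hlt_μ⟩, hg_zero⟩ :=
    intermediate_value_Ioo' h2.le hg_cont ⟨hg_μ, hg_lam⟩
  refine ⟨lam', hlam_lt, hlt_μ, ?_⟩
  rw [GPK_ofReal]
  simpa [g] using congrArg Complex.ofReal hg_zero

/-- If `λ ∈ (-b_{j+1}, -μ_j)` is a zero of `G_n`, then `G_{n+1}` has a zero
strictly between `λ` and `-μ_j`. -/
theorem real_zero_increases
    (a b : ℕ → ℝ) (α : ℝ)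
    (ha : ∀ k, 0 < a k) (hα : 0 < α) (hsum : HasSum a (α ^ 2))
    (hb0 : 0 ≤ b 0) (hbmono : StrictMono b) (hbtop : Tendsto b atTop atTop)
    (μ : ℕ → ℝ)
    (hμ : ∀ j, b j < μ j ∧ μ j < b (j + 1) ∧ GPK a b (-(μ j : ℂ)) = 0)
    (j : ℕ) (n : ℕ) (hn : 1 ≤ n)
    (lam : ℝ) (h1 : -(b (j + 1)) < lam) (h2 : lam < -(μ j))
    (hzero : (lam : ℂ) + (n : ℂ) ^ 2 * GPK a b (lam : ℂ) = 0) :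
    ∃ lam' : ℝ, lam < lam' ∧ lam' < -(μ j) ∧
      (lam' : ℂ) + ((n : ℂ) + 1) ^ 2 * GPK a b (lam' : ℂ) = 0 :=
  real_zero_increases_general a b α hsum hb0 hbmono μ hμ j n lam h1 h2 hzero
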